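/- Let ω ∈ ℂ satisfy ω³ = 1 and ω ≠ 1, and let u₀ ∈ ℂ with 1 + ω·\overline{u₀} ≠ 0. Let A(u₀) = (1/√6)·[[1−u₀, 1−ωu₀], [√2, √2·ω²]], and let e₀ = (1,0) and e₁ = (0,1) be the standard basis vectors of ℂ². Then A(u₀)ᴴ is invertible and ‖(A(u₀)ᴴ)⁻¹·e₀‖² − 1 = 2·(1 + Re u₀)/|1 + ω·\overline{u₀}|² and ‖(A(u₀)ᴴ)⁻¹·e₁‖² − 1 = 2·(1 + Re(ω·u₀))/|1 + ω·\overline{u₀}|², where the products are matrix-vector products and ‖·‖ is the Euclidean norm on ℂ². -/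

import Mathlib

open Matrix

/-- The 2×2 matrix-valued function `A` from the example. -/
noncomputable def exA (ω u : ℂ) : Matrix (Fin 2) (Fin 2) ℂ :=
  ((Real.sqrt 6 : ℂ))⁻¹ •
    !![1 - u, 1 - ω * u; (Real.sqrt 2 : ℂ), (Real.sqrt 2 : ℂ) * ω ^ 2]

/-!
Since `conj ω = ω²`, the matrix `√6 • A(u)ᴴ` is `!![1 - ū, √2; 1 - ω²ū, √2 ω]`, whose determinant
factors as `√2 (ω - 1)(1 + ωū)`; so `A(u)ᴴ` is invertible and the adjugate formula gives its
inverse. As `|ω - 1|² = 3`, the squared norms of the two columns of the inverse are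
`(2 + |1 - ω²ū|²) / |1 + ωū|²` and `(2 + |1 - ū|²) / |1 + ωū|²`, and `ω² + ω + 1 = 0` turns
`|1 - ω²ū|²` and `|1 - ū|²` into `|1 + ωū|² + 2 Re u` and `|1 + ωū|² + 2 Re (ωu)`.
-/

open ComplexConjugate

lemma norm_toEuclideanLin_single_one_sq {𝕜 m n : Type*} [RCLike 𝕜] [Fintype m] [Fintype n]
    [DecidableEq n] (N : Matrix m n 𝕜) (j : n) :
    ‖toEuclideanLin N (EuclideanSpace.single j 1)‖ ^ 2 = ∑ i, ‖N i j‖ ^ 2 := by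
  simp [EuclideanSpace.norm_sq_eq]

lemma inv_smul_fin_two {K : Type*} [Field K] {k a b c d : K} (hk : k ≠ 0)
    (hdet : a * d - b * c ≠ 0) :
    (k • !![a, b; c, d])⁻¹ = (k * (a * d - b * c))⁻¹ • !![d, -b; -c, a] := by
  have : Invertible k := invertibleOfNonzero hk
  rw [Matrix.inv_smul _ k (by simpa using hdet), inv_def, det_fin_two_of, adjugate_fin_two_of,
    smul_smul, invOf_eq_inv, Ring.inverse_eq_inv', mul_inv]

namespace PrimitiveCubeRoot

variable {ω : ℂ} (h3 : ω ^ 3 = 1) (h1 : ω ≠ 1)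
include h3

lemma norm_eq_one : ‖ω‖ = 1 := Complex.norm_eq_one_of_pow_eq_one h3 (by norm_num)

lemma conj_eq_sq : conj ω = ω ^ 2 := by
  rw [← Complex.inv_eq_conj (norm_eq_one h3), inv_eq_of_mul_eq_one_right]
  rw [← pow_succ', h3]

include h1

lemma sq_add_self_add_one : ω ^ 2 + ω + 1 = 0 := by
  have : (ω - 1) * (ω ^ 2 + ω + 1) = 0 := by linear_combination h3
  exact (mul_eq_zero.mp this).resolve_left (sub_ne_zero.mpr h1)

lemma re_eq : ω.re = -1 / 2 := by
  have h := congrArg Complex.re (Complex.add_conj ω)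
  rw [conj_eq_sq h3, show ω + ω ^ 2 = -1 by linear_combination sq_add_self_add_one h3 h1] at h
  simp only [Complex.neg_re, Complex.one_re, Complex.ofReal_re] at h
  linarith

lemma im_sq_eq : ω.im ^ 2 = 3 / 4 := by
  have h := norm_eq_one h3
  rw [Complex.norm_eq_sqrt_sq_add_sq, re_eq h3 h1, Real.sqrt_eq_one] at h
  linarith

lemma norm_sub_one_sq : ‖ω - 1‖ ^ 2 = 3 := by
  rw [Complex.sq_norm, Complex.normSq_sub, Complex.normSq_eq_norm_sq, norm_eq_one h3]
  simp [re_eq h3 h1]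
  norm_num

lemma norm_one_sub_sq_mul_sq (v : ℂ) :
    ‖1 - ω ^ 2 * v‖ ^ 2 = ‖1 + ω * v‖ ^ 2 + 2 * v.re := by
  rw [show 1 - ω ^ 2 * v = (1 + ω * v) + v by linear_combination (-v) * sq_add_self_add_one h3 h1]
  simp only [Complex.sq_norm, Complex.normSq_add]
  simp [Complex.mul_re, Complex.mul_im, re_eq h3 h1, Complex.normSq_apply]
  ring

lemma norm_one_sub_conj_sq (u : ℂ) :
    ‖1 - conj u‖ ^ 2 = ‖1 + ω * conj u‖ ^ 2 + 2 * (ω * u).re := by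
  rw [show 1 - conj u = (1 + ω * conj u) + conj (ω * u) by
    rw [map_mul, conj_eq_sq h3]; linear_combination (-conj u) * sq_add_self_add_one h3 h1]
  simp only [Complex.sq_norm, Complex.normSq_add, Complex.conj_conj, Complex.normSq_conj]
  simp [Complex.mul_re, Complex.mul_im, re_eq h3 h1, Complex.normSq_apply]
  linear_combination (-(u.re ^ 2 + u.im ^ 2)) * im_sq_eq h3 h1

end PrimitiveCubeRoot

section

variable {ω : ℂ} (u : ℂ) (h3 : ω ^ 3 = 1)
include h3

lemma conjTranspose_exA : (exA ω u)ᴴ = ((Real.sqrt 6 : ℂ))⁻¹ •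
    !![1 - conj u, (Real.sqrt 2 : ℂ); 1 - ω ^ 2 * conj u, (Real.sqrt 2 : ℂ) * ω] := by
  have h4 : ω ^ 4 = ω := by linear_combination ω * h3
  ext i j
  fin_cases i <;> fin_cases j <;>
    simp [exA, Complex.conj_ofReal, PrimitiveCubeRoot.conj_eq_sq h3, ← pow_mul, h4]

lemma det_conjTranspose_exA : (exA ω u)ᴴ.det =
    ((Real.sqrt 6 : ℂ))⁻¹ ^ 2 * ((Real.sqrt 2 : ℂ) * ((ω - 1) * (1 + ω * conj u))) := by
  rw [conjTranspose_exA u h3, det_smul, det_fin_two_of, Fintype.card_fin]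
  ring

variable {u} (h1 : ω ≠ 1) (hu : 1 + ω * conj u ≠ 0)
include h1 hu

lemma isUnit_conjTranspose_exA : IsUnit (exA ω u)ᴴ := by
  rw [isUnit_iff_isUnit_det, det_conjTranspose_exA u h3, isUnit_iff_ne_zero]
  have := sub_ne_zero.mpr h1
  simp [*]

lemma inv_conjTranspose_exA :
    ((exA ω u)ᴴ)⁻¹ = ((Real.sqrt 6 : ℂ) / ((Real.sqrt 2 : ℂ) * ((ω - 1) * (1 + ω * conj u)))) •
      !![(Real.sqrt 2 : ℂ) * ω, -(Real.sqrt 2 : ℂ); -(1 - ω ^ 2 * conj u), 1 - conj u] := by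
  have hdet : (1 - conj u) * ((Real.sqrt 2 : ℂ) * ω) - (Real.sqrt 2 : ℂ) * (1 - ω ^ 2 * conj u) =
      (Real.sqrt 2 : ℂ) * ((ω - 1) * (1 + ω * conj u)) := by ring
  have hk : (Real.sqrt 2 : ℂ) * ((ω - 1) * (1 + ω * conj u)) ≠ 0 :=
    mul_ne_zero (by simp) (mul_ne_zero (sub_ne_zero.mpr h1) hu)
  rw [conjTranspose_exA u h3, inv_smul_fin_two (inv_ne_zero (by simp)) (hdet ▸ hk), hdet, mul_inv,
    inv_inv, div_eq_mul_inv]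

lemma norm_inv_conjTranspose_exA_scalar_sq :
    ‖(Real.sqrt 6 : ℂ) / ((Real.sqrt 2 : ℂ) * ((ω - 1) * (1 + ω * conj u)))‖ ^ 2 =
      (‖1 + ω * conj u‖ ^ 2)⁻¹ := by
  have : ‖1 + ω * conj u‖ ≠ 0 := norm_ne_zero_iff.mpr hu
  rw [norm_div, norm_mul, norm_mul, div_pow, mul_pow, mul_pow,
    PrimitiveCubeRoot.norm_sub_one_sq h3 h1]
  simp
  field_simp
  norm_num

end

theorem stmt15 (ω : ℂ) (hω3 : ω ^ 3 = 1) (hω1 : ω ≠ 1)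
    (u₀ : ℂ) (hu₀ : 1 + ω * starRingEnd ℂ u₀ ≠ 0) :
    IsUnit ((exA ω u₀)ᴴ) ∧
      ‖(Matrix.toEuclideanLin (((exA ω u₀)ᴴ)⁻¹)) (EuclideanSpace.single 0 1)‖ ^ 2 - 1 =
        2 * (1 + u₀.re) / ‖1 + ω * starRingEnd ℂ u₀‖ ^ 2 ∧
      ‖(Matrix.toEuclideanLin (((exA ω u₀)ᴴ)⁻¹)) (EuclideanSpace.single 1 1)‖ ^ 2 - 1 =
        2 * (1 + (ω * u₀).re) / ‖1 + ω * starRingEnd ℂ u₀‖ ^ 2 := by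
  have hD : ‖1 + ω * conj u₀‖ ≠ 0 := norm_ne_zero_iff.mpr hu₀
  have hsqrt2 : ‖(Real.sqrt 2 : ℂ)‖ ^ 2 = 2 := by simp
  refine ⟨isUnit_conjTranspose_exA hω3 hω1 hu₀, ?_, ?_⟩ <;>
  simp only [inv_conjTranspose_exA hω3 hω1 hu₀, norm_toEuclideanLin_single_one_sq,
    Fin.sum_univ_two, Matrix.smul_apply, smul_eq_mul, norm_mul, mul_pow,
    norm_inv_conjTranspose_exA_scalar_sq hω3 hω1 hu₀, of_apply, cons_val', cons_val_zero,
    cons_val_one, empty_val', cons_val_fin_one, norm_neg, PrimitiveCubeRoot.norm_eq_one hω3,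
    hsqrt2, mul_one]
  · rw [PrimitiveCubeRoot.norm_one_sub_sq_mul_sq hω3 hω1, Complex.conj_re]
    field_simp
    ring
  · rw [PrimitiveCubeRoot.norm_one_sub_conj_sq hω3 hω1]
    field_simp
    ring
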